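/- Let P be a finite PIP and x ∈ P. The covering relations in the face poset of ⊞_P are exactly: C(I, M \ {x}) ⋖ C(I, M) and C(I \ {x}, M \ {x}) ⋖ C(I, M), for x ∈ M. Moreover, the pairs of faces that share a common cover but have no meet are exactly the pairs {C(I, M \ {x}), C(I \ {x}, M \ {x})} for x ∈ M. -/

import Mathlib

open Finset

variable {P : Type*} [Fintype P] [DecidableEq P] [PartialOrder P]

/-- A subset is consistent if it contains no inconsistent pair. -/
def Consistent (incons : P → P → Prop) (S : Finset P) : Prop :=
  ∀ a ∈ S, ∀ b ∈ S, ¬ incons a b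

/-- A downset (order ideal). -/
def IsDownset (I : Finset P) : Prop :=
  ∀ x ∈ I, ∀ y, y ≤ x → y ∈ I

open Classical in
/-- The maximal elements of a finite set. -/
noncomputable def maxElems (I : Finset P) : Finset P :=
  I.filter (fun x => ∀ y ∈ I, ¬ x < y)

open Classical in
/-- The downset generated by a set. -/
noncomputable def downGen (A : Finset P) : Finset P :=
  Finset.univ.filter (fun x => ∃ a ∈ A, x ≤ a)

/-- A consistent antichain: the faces of the crossing complex `Δ_P`. -/
def ConsAntichain (incons : P → P → Prop) (A : Finset P) : Prop :=
  (∀ a ∈ A, ∀ b ∈ A, a ≠ b → ¬ a ≤ b) ∧ Consistent incons A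

/-- A face of the cubical complex `⊞_P`: a pair (I, M) with I a consistent
downset and M ⊆ max I. -/
def IsFace (incons : P → P → Prop) (I M : Finset P) : Prop :=
  IsDownset I ∧ Consistent incons I ∧ M ⊆ maxElems I

/-- The face-containment order on faces of `⊞_P`:
`C(I',M') ⊆ C(I,M)` iff `M' ⊆ M` and `I \ M ⊆ I' ⊆ I`. -/
def FaceLE (p q : Finset P × Finset P) : Prop :=
  p.2 ⊆ q.2 ∧ q.1 \ q.2 ⊆ p.1 ∧ p.1 ⊆ q.1

/-- A pair is a face of `⊞_P`. -/
def IsFaceP (incons : P → P → Prop) (p : Finset P × Finset P) : Prop :=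
  IsFace incons p.1 p.2

/-- Strict face-containment. -/
def FaceLT (p q : Finset P × Finset P) : Prop :=
  FaceLE p q ∧ p ≠ q

/-- `q` covers `p` in the face poset of `⊞_P`. -/
def FaceCovers (incons : P → P → Prop) (q p : Finset P × Finset P) : Prop :=
  IsFaceP incons q ∧ IsFaceP incons p ∧ FaceLT p q ∧
  ∀ r : Finset P × Finset P, IsFaceP incons r → FaceLT p r → FaceLT r q → False

/-- `p` and `q` have a meet in the face poset of `⊞_P`. -/
def HasMeet (incons : P → P → Prop) (p q : Finset P × Finset P) : Prop :=
  ∃ m : Finset P × Finset P, IsFaceP incons m ∧ FaceLE m p ∧ FaceLE m q ∧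
    ∀ m' : Finset P × Finset P, IsFaceP incons m' →
      FaceLE m' p → FaceLE m' q → FaceLE m' m

/-!
Every `x ∈ M` gives two facets of `C(I, M)`: `x` can be frozen inside (`C(I, M \ {x})`) or
outside (`C(I \ {x}, M \ {x})`) the face. Below `C(I, M)` the free set `M` shrinks strictly, so
faces whose free sets differ by one element are covers, and any face strictly below `C(I, M)` lies
below one of these facets. A common lower bound `m` of `p` and `q` must contain `p.1 \ p.2` and be
contained in `q.1`, and conversely `(p.1 ∩ q.1, p.2 ∩ q.2)` is the meet whenever
`p.1 \ p.2 ⊆ q.1` and `q.1 \ q.2 ⊆ p.1`; the two facets in the same direction `x` violate this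
exactly at `x`, while facets in different directions always satisfy it.
-/

lemma Finset.sdiff_subset_erase_of_mem {α : Type*} [DecidableEq α] {s t : Finset α} {a : α}
    (ha : a ∈ t) : s \ t ⊆ s.erase a :=
  subset_erase.mpr ⟨sdiff_subset, fun h => (mem_sdiff.mp h).2 ha⟩

section FaceOrder

variable {α : Type*} [DecidableEq α] {I M : Finset α} {x : α} {p q : Finset α × Finset α}

lemma faceLE_erase_snd (I M : Finset α) (x : α) : FaceLE (I, M.erase x) (I, M) :=
  ⟨erase_subset _ _, sdiff_subset, Subset.rfl⟩

lemma faceLE_erase (I : Finset α) (hx : x ∈ M) : FaceLE (I.erase x, M.erase x) (I, M) :=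
  ⟨erase_subset _ _, sdiff_subset_erase_of_mem hx, erase_subset _ _⟩

lemma FaceLE.erase_snd (h : FaceLE p (I, M)) (hx₁ : x ∈ p.1) (hx₂ : x ∉ p.2) :
    FaceLE p (I, M.erase x) := by
  refine ⟨subset_erase.mpr ⟨h.1, hx₂⟩, fun z hz => ?_, h.2.2⟩
  obtain ⟨hzI, hzM⟩ := mem_sdiff.mp hz
  by_cases hzx : z = x
  · exact hzx ▸ hx₁
  · exact h.2.1 (mem_sdiff.mpr ⟨hzI, fun hz => hzM (mem_erase.mpr ⟨hzx, hz⟩)⟩)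

lemma FaceLE.erase (h : FaceLE p (I, M)) (hx₁ : x ∉ p.1) (hx₂ : x ∉ p.2) :
    FaceLE p (I.erase x, M.erase x) :=
  ⟨subset_erase.mpr ⟨h.1, hx₂⟩, (erase_sdiff_distrib I M x ▸ erase_subset _ _).trans h.2.1,
    subset_erase.mpr ⟨h.2.2, hx₁⟩⟩

lemma FaceLE.eq_of_snd_eq (h : FaceLE p q) (hp : p.2 ⊆ p.1) (h₂ : p.2 = q.2) : p = q := by
  refine Prod.ext (Subset.antisymm h.2.2 fun z hz => ?_) h₂
  by_cases hzq : z ∈ q.2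
  · exact hp (h₂ ▸ hzq)
  · exact h.2.1 (mem_sdiff.mpr ⟨hz, hzq⟩)

lemma FaceLT.snd_ssubset (h : FaceLT p q) (hp : p.2 ⊆ p.1) : p.2 ⊂ q.2 :=
  ssubset_of_subset_of_ne h.1.1 fun h₂ => h.2 (h.1.eq_of_snd_eq hp h₂)

lemma sdiff_subset_of_eq_or_eq (h : p = (I, M.erase x) ∨ p = (I.erase x, M.erase x)) :
    p.1 \ p.2 ⊆ I \ M.erase x := by
  rcases h with rfl | rfl
  exacts [Subset.rfl, sdiff_subset_sdiff (erase_subset _ _) Subset.rfl]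

lemma erase_subset_of_eq_or_eq (h : p = (I, M.erase x) ∨ p = (I.erase x, M.erase x)) :
    I.erase x ⊆ p.1 := by
  rcases h with rfl | rfl
  exacts [erase_subset _ _, Subset.rfl]

end FaceOrder

section FacePoset

variable {α : Type*} [Fintype α] [DecidableEq α] [PartialOrder α] {incons : α → α → Prop}
  {I J M N : Finset α} {x : α} {p q r : Finset α × Finset α}

lemma mem_maxElems : x ∈ maxElems I ↔ x ∈ I ∧ ∀ y ∈ I, ¬ x < y := by
  classical
  rw [maxElems, mem_filter]

lemma maxElems_subset : maxElems I ⊆ I := fun _ hx => (mem_maxElems.mp hx).1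

namespace IsFace

lemma snd_subset (h : IsFace incons I M) : M ⊆ I := h.2.2.trans maxElems_subset

lemma erase_snd (h : IsFace incons I M) (x : α) : IsFace incons I (M.erase x) :=
  ⟨h.1, h.2.1, (erase_subset _ _).trans h.2.2⟩

lemma erase_of_mem (h : IsFace incons I M) (hx : x ∈ M) :
    IsFace incons (I.erase x) (M.erase x) := by
  obtain ⟨hdown, hcons, hmax⟩ := h
  have hx_max := mem_maxElems.mp (hmax hx)
  refine ⟨fun a ha b hba => ?_, fun a ha b hb => hcons a (mem_of_mem_erase ha) b
    (mem_of_mem_erase hb), fun m hm => ?_⟩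
  · obtain ⟨hax, haI⟩ := mem_erase.mp ha
    refine mem_erase.mpr ⟨?_, hdown a haI b hba⟩
    rintro rfl
    exact hx_max.2 a haI (lt_of_le_of_ne hba (Ne.symm hax))
  · obtain ⟨hmx, hm⟩ := mem_erase.mp hm
    have hm_max := mem_maxElems.mp (hmax hm)
    exact mem_maxElems.mpr ⟨mem_erase.mpr ⟨hmx, hm_max.1⟩,
      fun y hy => hm_max.2 y (mem_of_mem_erase hy)⟩

lemma inter (hI : IsFace incons I M) (hJ : IsFace incons J N) :
    IsFace incons (I ∩ J) (M ∩ N) := by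
  refine ⟨fun a ha b hba => ?_, fun a ha b hb => hI.2.1 a (mem_inter.mp ha).1 b
    (mem_inter.mp hb).1, fun m hm => ?_⟩
  · obtain ⟨haI, haJ⟩ := mem_inter.mp ha
    exact mem_inter.mpr ⟨hI.1 a haI b hba, hJ.1 a haJ b hba⟩
  · obtain ⟨hmM, hmN⟩ := mem_inter.mp hm
    have hm_max := mem_maxElems.mp (hI.2.2 hmM)
    exact mem_maxElems.mpr ⟨mem_inter.mpr ⟨hm_max.1, hJ.snd_subset hmN⟩,
      fun y hy => hm_max.2 y (mem_inter.mp hy).1⟩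

end IsFace

lemma faceCovers_of_card_eq (hq : IsFaceP incons q) (hp : IsFaceP incons p) (h : FaceLE p q)
    (hcard : #q.2 = #p.2 + 1) : FaceCovers incons q p := by
  refine ⟨hq, hp, ⟨h, fun hpq => by rw [hpq] at hcard; omega⟩, fun r hr hpr hrq => ?_⟩
  have := card_lt_card (hpr.snd_ssubset hp.snd_subset)
  have := card_lt_card (hrq.snd_ssubset hr.snd_subset)
  omega

lemma FaceCovers.eq_of_faceLE (h : FaceCovers incons q p) (hr : IsFaceP incons r)
    (hpr : FaceLE p r) (hrq : FaceLT r q) : p = r := by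
  by_contra hne
  exact h.2.2.2 r hr ⟨hpr, hne⟩ hrq

lemma faceCovers_iff (hIM : IsFace incons I M) :
    FaceCovers incons (I, M) p ↔
      ∃ x ∈ M, p = (I, M.erase x) ∨ p = (I.erase x, M.erase x) := by
  constructor
  · intro h
    obtain ⟨x, hxM, hxp⟩ := exists_of_ssubset (h.2.2.1.snd_ssubset h.2.1.snd_subset)
    refine ⟨x, hxM, ?_⟩
    by_cases hx₁ : x ∈ p.1
    · exact .inl <| h.eq_of_faceLE (hIM.erase_snd x) (h.2.2.1.1.erase_snd hx₁ hxp)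
        ⟨faceLE_erase_snd I M x, ne_of_apply_ne Prod.snd (erase_ne_self.mpr hxM)⟩
    · exact .inr <| h.eq_of_faceLE (hIM.erase_of_mem hxM) (h.2.2.1.1.erase hx₁ hxp)
        ⟨faceLE_erase I hxM, ne_of_apply_ne Prod.fst (erase_ne_self.mpr (hIM.snd_subset hxM))⟩
  · rintro ⟨x, hx, rfl | rfl⟩
    · exact faceCovers_of_card_eq hIM (hIM.erase_snd x) (faceLE_erase_snd I M x)
        (card_erase_add_one hx).symm
    · exact faceCovers_of_card_eq hIM (hIM.erase_of_mem hx) (faceLE_erase I hx)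
        (card_erase_add_one hx).symm

lemma HasMeet.symm (h : HasMeet incons p q) : HasMeet incons q p := by
  obtain ⟨m, hm, hmp, hmq, hgreatest⟩ := h
  exact ⟨m, hm, hmq, hmp, fun m' hm' hm'q hm'p => hgreatest m' hm' hm'p hm'q⟩

lemma HasMeet.sdiff_subset (h : HasMeet incons p q) : p.1 \ p.2 ⊆ q.1 := by
  obtain ⟨m, -, hmp, hmq, -⟩ := h
  exact hmp.2.1.trans hmq.2.2

lemma hasMeet_of_sdiff_subset (hp : IsFaceP incons p) (hq : IsFaceP incons q)
    (hpq : p.1 \ p.2 ⊆ q.1) (hqp : q.1 \ q.2 ⊆ p.1) : HasMeet incons p q := by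
  refine ⟨(p.1 ∩ q.1, p.2 ∩ q.2), hp.inter hq,
    ⟨inter_subset_left, subset_inter sdiff_subset hpq, inter_subset_left⟩,
    ⟨inter_subset_right, subset_inter hqp sdiff_subset, inter_subset_right⟩,
    fun m _ hmp hmq => ⟨subset_inter hmp.1 hmq.1, fun z hz => ?_, subset_inter hmp.2.2 hmq.2.2⟩⟩
  obtain ⟨hz, hz₂⟩ := mem_sdiff.mp hz
  obtain ⟨hzp, hzq⟩ := mem_inter.mp hz
  by_cases hzp₂ : z ∈ p.2
  · exact hmq.2.1 (mem_sdiff.mpr ⟨hzq, fun hzq₂ => hz₂ (mem_inter.mpr ⟨hzp₂, hzq₂⟩)⟩)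
  · exact hmp.2.1 (mem_sdiff.mpr ⟨hzp, hzp₂⟩)

lemma not_hasMeet_erase (hx : x ∈ I) :
    ¬ HasMeet incons (I, M.erase x) (I.erase x, M.erase x) := fun h =>
  (mem_erase.mp (h.sdiff_subset (mem_sdiff.mpr ⟨hx, fun hxM => (mem_erase.mp hxM).1 rfl⟩))).1 rfl

lemma hasMeet_of_ne {y : α} (hp : IsFaceP incons p) (hq : IsFaceP incons q)
    (hx : x ∈ M) (hy : y ∈ M) (hxy : x ≠ y)
    (hpx : p = (I, M.erase x) ∨ p = (I.erase x, M.erase x))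
    (hqy : q = (I, M.erase y) ∨ q = (I.erase y, M.erase y)) : HasMeet incons p q := by
  have key : ∀ {a b : α}, b ∈ M → a ≠ b → I \ M.erase a ⊆ I.erase b := fun hb hab =>
    sdiff_subset_erase_of_mem (mem_erase.mpr ⟨hab.symm, hb⟩)
  exact hasMeet_of_sdiff_subset hp hq
    ((sdiff_subset_of_eq_or_eq hpx).trans <| (key hy hxy).trans (erase_subset_of_eq_or_eq hqy))
    ((sdiff_subset_of_eq_or_eq hqy).trans <|
      (key hx hxy.symm).trans (erase_subset_of_eq_or_eq hpx))

end FacePoset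

theorem covers_and_derivative_pairs_general (incons : P → P → Prop) :
    (∀ I M : Finset P, IsFace incons I M →
      ∀ p : Finset P × Finset P,
        FaceCovers incons (I, M) p ↔
        ∃ x ∈ M, p = (I, M.erase x) ∨ p = (I.erase x, M.erase x)) ∧
    (∀ p q : Finset P × Finset P,
      IsFaceP incons p → IsFaceP incons q → p ≠ q →
      (((∃ r : Finset P × Finset P, FaceCovers incons r p ∧ FaceCovers incons r q) ∧
          ¬ HasMeet incons p q) ↔
        ∃ (I M : Finset P) (x : P), IsFace incons I M ∧ x ∈ M ∧
          ({p, q} : Finset (Finset P × Finset P)) =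
            {(I, M.erase x), (I.erase x, M.erase x)})) := by
  refine ⟨fun I M hIM p => faceCovers_iff hIM, fun p q hp hq hpq => ?_⟩
  simp only [← coe_inj, coe_pair, Set.pair_eq_pair_iff]
  constructor
  · rintro ⟨⟨⟨I, M⟩, hrp, hrq⟩, hno_meet⟩
    obtain ⟨x, hx, hpx⟩ := (faceCovers_iff hrp.1).mp hrp
    obtain ⟨y, hy, hqy⟩ := (faceCovers_iff hrp.1).mp hrq
    obtain rfl : x = y := by
      by_contra hxy
      exact hno_meet (hasMeet_of_ne hp hq hx hy hxy hpx hqy)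
    refine ⟨I, M, x, hrp.1, hx, ?_⟩
    rcases hpx with rfl | rfl <;> rcases hqy with rfl | rfl <;> simp_all
  · rintro ⟨I, M, x, hIM, hx, ⟨rfl, rfl⟩ | ⟨rfl, rfl⟩⟩
    · exact ⟨⟨(I, M), (faceCovers_iff hIM).mpr ⟨x, hx, .inl rfl⟩,
        (faceCovers_iff hIM).mpr ⟨x, hx, .inr rfl⟩⟩, not_hasMeet_erase (hIM.snd_subset hx)⟩
    · exact ⟨⟨(I, M), (faceCovers_iff hIM).mpr ⟨x, hx, .inr rfl⟩,
        (faceCovers_iff hIM).mpr ⟨x, hx, .inl rfl⟩⟩,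
        fun h => not_hasMeet_erase (hIM.snd_subset hx) h.symm⟩

/-- The covering relations in the face poset of `⊞_P` are exactly
`C(I, M \ {x}) ⋖ C(I, M)` and `C(I \ {x}, M \ {x}) ⋖ C(I, M)` for `x ∈ M`;
and the pairs of faces sharing a common cover but having no meet are exactly
the pairs `{C(I, M \ {x}), C(I \ {x}, M \ {x})}` for `x ∈ M`. -/
theorem covers_and_derivative_pairs (incons : P → P → Prop)
    (hirr : ∀ a, ¬ incons a a)
    (hsymm : ∀ a b, incons a b → incons b a)
    (hup : ∀ a b a' b', incons a b → a ≤ a' → b ≤ b' → incons a' b') :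
    (∀ I M : Finset P, IsFace incons I M →
      ∀ p : Finset P × Finset P,
        FaceCovers incons (I, M) p ↔
        ∃ x ∈ M, p = (I, M.erase x) ∨ p = (I.erase x, M.erase x)) ∧
    (∀ p q : Finset P × Finset P,
      IsFaceP incons p → IsFaceP incons q → p ≠ q →
      (((∃ r : Finset P × Finset P, FaceCovers incons r p ∧ FaceCovers incons r q) ∧
          ¬ HasMeet incons p q) ↔
        ∃ (I M : Finset P) (x : P), IsFace incons I M ∧ x ∈ M ∧
          ({p, q} : Finset (Finset P × Finset P)) =
            {(I, M.erase x), (I.erase x, M.erase x)})) :=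
  covers_and_derivative_pairs_general incons
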